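/- Let $F : \mathbb{R}^p \to \mathbb{R}$ be $C^2$ with eigenvalues of $\nabla^2 F(\theta)$ contained in $[m, L]$ for all $\theta$ in a neighborhood of a point $\widehat\theta$, where $0 < m \le L$, and fix $0 < \alpha < 1/L$. Suppose $\widehat\theta^{(t)} \to \widehat\theta$, and define $b^t = \widehat\theta^{(t-1)} - (\nabla^2 F(\widehat\theta^{(t-1)}))^{-1}\nabla F(\widehat\theta^{(t-1)})$ and $\theta^{NS} = \widehat\theta - (\nabla^2 F(\widehat\theta))^{-1}\nabla F(\widehat\theta)$. If $(\widetilde\theta^{(t)})$ satisfies $\widetilde\theta^{(t)} = \widetilde\theta^{(t-1)} - \alpha(\nabla F(\widehat\theta^{(t-1)}) + \nabla^2 F(\widehat\theta^{(t-1)})[\widetilde\theta^{(t-1)} - \widehat\theta^{(t-1)}])$, then $\widetilde\theta^{(t)} \to \theta^{NS}$ as $t \to \infty$. Assume additionally that the Hessian bound $mI \preceq \nabla^2 F(\widehat\theta^{(t)}) \preceq LI$ holds at every iterate $\widehat\theta^{(t)}$. -/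

import Mathlib

open scoped RealInnerProductSpace
open Filter Topology

/-!
With `e t = θt t - θNS`, the recursion reads
`e (t + 1) = (I - α ∇²F (θh t)) (e t) + α (∇²F (θh t) (θh t - θNS) - ∇F (θh t))`.
The Hessian is symmetric, so the bounds `m ≤ ∇²F ≤ L` give `‖I - α ∇²F (θh t)‖ ≤ 1 - α m < 1`,
while the perturbation tends to `α (∇²F θhat (θhat - θNS) - ∇F θhat) = 0` by continuity of
`∇F` and `∇²F`. A contraction with vanishing perturbation tends to zero.
-/

theorem tendsto_zero_of_le_mul_add {a ε : ℕ → ℝ} {r : ℝ} (hr0 : 0 ≤ r) (hr1 : r < 1)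
    (ha : ∀ n, 0 ≤ a n) (h : ∀ n, a (n + 1) ≤ r * a n + ε n)
    (hε : Tendsto ε atTop (𝓝 0)) : Tendsto a atTop (𝓝 0) := by
  refine tendsto_order.2 ⟨fun b hb ↦ .of_forall fun n ↦ hb.trans_le (ha n), fun δ hδ ↦ ?_⟩
  obtain ⟨N, hN⟩ := eventually_atTop.1 <|
    (tendsto_order.1 hε).2 ((1 - r) * (δ / 2)) (by nlinarith)
  -- past `N`, the excess `a n - δ / 2` contracts geometrically
  have hgeom (k : ℕ) : a (N + k) - δ / 2 ≤ r ^ k * (a N - δ / 2) :=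
    le_geom (u := fun k ↦ a (N + k) - δ / 2) hr0 k fun j _ ↦ by
      have := hN (N + j) (by omega)
      have := h (N + j)
      simp only [← add_assoc]
      nlinarith
  obtain ⟨K, hK⟩ := eventually_atTop.1 <| (tendsto_order.1 <|
    (tendsto_pow_atTop_nhds_zero_of_lt_one hr0 hr1).mul_const (a N - δ / 2)).2 (δ / 2)
      (by simpa using half_pos hδ)
  refine eventually_atTop.2 ⟨N + K, fun n hn ↦ ?_⟩
  obtain ⟨k, rfl⟩ := Nat.exists_eq_add_of_le (le_of_add_le_left hn)
  linarith [hgeom k, hK k (by omega)]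

theorem tendsto_zero_of_eq_apply_add {𝕜 E : Type*} [NontriviallyNormedField 𝕜]
    [SeminormedAddCommGroup E] [NormedSpace 𝕜 E] {x ε : ℕ → E} {A : ℕ → E →L[𝕜] E} {r : ℝ}
    (hA : ∀ n, ‖A n‖ ≤ r) (hr : r < 1) (hx : ∀ n, x (n + 1) = A n (x n) + ε n)
    (hε : Tendsto ε atTop (𝓝 0)) : Tendsto x atTop (𝓝 0) := by
  refine tendsto_zero_iff_norm_tendsto_zero.2 <| tendsto_zero_of_le_mul_add
    ((norm_nonneg _).trans (hA 0)) hr (fun n ↦ norm_nonneg _) (fun n ↦ ?_)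
    (tendsto_zero_iff_norm_tendsto_zero.1 hε)
  calc ‖x (n + 1)‖ = ‖A n (x n) + ε n‖ := by rw [hx]
    _ ≤ ‖A n (x n)‖ + ‖ε n‖ := norm_add_le _ _
    _ ≤ r * ‖x n‖ + ‖ε n‖ := by gcongr; exact (A n).le_of_opNorm_le (hA n) _

section Hessian

variable {E : Type*} [NormedAddCommGroup E] [InnerProductSpace ℝ E] [CompleteSpace E]
  {F : E → ℝ}

theorem ContDiff.gradient {m n : WithTop ℕ∞} (hF : ContDiff ℝ n F) (hmn : m + 1 ≤ n) :
    ContDiff ℝ m (gradient F) :=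
  (InnerProductSpace.toDual ℝ E).symm.contDiff.comp (hF.fderiv_right hmn)

theorem inner_fderiv_gradient_apply (x u v : E) :
    ⟪fderiv ℝ (gradient F) x u, v⟫ = fderiv ℝ (fderiv ℝ F) x u v := by
  rw [show gradient F = (InnerProductSpace.toDual ℝ E).symm ∘ fderiv ℝ F from rfl,
    LinearIsometryEquiv.comp_fderiv]
  exact InnerProductSpace.toDual_symm_apply

theorem ContDiffAt.isSymmetric_fderiv_gradient {x : E} (hF : ContDiffAt ℝ 2 F x) :
    (fderiv ℝ (gradient F) x).IsSymmetric := fun u v ↦ by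
  rw [ContinuousLinearMap.coe_coe, real_inner_comm _ u, inner_fderiv_gradient_apply,
    inner_fderiv_gradient_apply]
  exact hF.isSymmSndFDerivAt (by simp) u v

end Hessian

namespace ContinuousLinearMap

theorem opNorm_le_of_isSymmetric {𝕜 E : Type*} [RCLike 𝕜] [NormedAddCommGroup E]
    [InnerProductSpace 𝕜 E] {T : E →L[𝕜] E} (hT : T.IsSymmetric) {c : ℝ}
    (hc : 0 ≤ c) (h : ∀ x, |RCLike.re (inner 𝕜 (T x) x)| ≤ c * ‖x‖ ^ 2) : ‖T‖ ≤ c := by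
  rw [norm_eq_iSup_rayleighQuotient T hT]
  refine ciSup_le fun x ↦ ?_
  rw [rayleighQuotient, abs_div, abs_sq]
  exact div_le_of_le_mul₀ (sq_nonneg _) hc (h x)

theorem norm_id_sub_smul_le {E : Type*} [NormedAddCommGroup E]
    [InnerProductSpace ℝ E] {H : E →L[ℝ] E} (hH : H.IsSymmetric) {m L α : ℝ} (hmL : m ≤ L)
    (hα : 0 ≤ α) (hαL : α * L ≤ 1)
    (hbounds : ∀ v, m * ‖v‖ ^ 2 ≤ ⟪v, H v⟫ ∧ ⟪v, H v⟫ ≤ L * ‖v‖ ^ 2) :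
    ‖ContinuousLinearMap.id ℝ E - α • H‖ ≤ 1 - α * m := by
  have hsymm : (ContinuousLinearMap.id ℝ E - α • H).IsSymmetric :=
    LinearMap.IsSymmetric.id.sub (hH.smul (conj_trivial α))
  refine opNorm_le_of_isSymmetric hsymm (by nlinarith) fun v ↦ ?_
  obtain ⟨hlow, hup⟩ := hbounds v
  simp only [RCLike.re_to_real, sub_apply, ContinuousLinearMap.id_apply, smul_apply]
  rw [real_inner_comm, inner_sub_right, real_inner_smul_right, real_inner_self_eq_norm_sq, abs_le]
  constructor <;> nlinarith [sq_nonneg ‖v‖, mul_le_mul_of_nonneg_left hlow hα,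
    mul_le_mul_of_nonneg_left hup hα]

end ContinuousLinearMap

theorem stmt9_general {p : ℕ} (F : EuclideanSpace ℝ (Fin p) → ℝ) (m L α : ℝ)
    (hF : ContDiff ℝ 2 F) (hm : 0 < m) (hmL : m ≤ L) (hα : 0 < α) (hαL : α < 1 / L)
    (θh θt : ℕ → EuclideanSpace ℝ (Fin p)) (θhat θNS : EuclideanSpace ℝ (Fin p))
    (heigh : ∀ t (v : EuclideanSpace ℝ (Fin p)),
      m * ‖v‖ ^ 2 ≤ ⟪v, fderiv ℝ (gradient F) (θh t) v⟫ ∧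
      ⟪v, fderiv ℝ (gradient F) (θh t) v⟫ ≤ L * ‖v‖ ^ 2)
    (hconv : Tendsto θh atTop (nhds θhat))
    (hNS : fderiv ℝ (gradient F) θhat (θhat - θNS) = gradient F θhat)
    (hrec : ∀ t ≥ 1, θt t = θt (t - 1) -
      α • (gradient F (θh (t - 1)) +
        fderiv ℝ (gradient F) (θh (t - 1)) (θt (t - 1) - θh (t - 1)))) :
    Tendsto θt atTop (nhds θNS) := by
  set H := fderiv ℝ (gradient F)
  have hαL' : α * L ≤ 1 := ((lt_div_iff₀ (hm.trans_le hmL)).1 hαL).le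
  have hgrad : ContDiff ℝ 1 (gradient F) := hF.gradient (by norm_num)
  have hpert : Tendsto (fun t ↦ α • (H (θh t) (θh t - θNS) - gradient F (θh t))) atTop
      (𝓝 0) := by
    have hcont : Continuous fun x ↦ α • (H x (x - θNS) - gradient F x) :=
      (((hgrad.continuous_fderiv one_ne_zero).clm_apply (continuous_id.sub continuous_const)).sub
        hgrad.continuous).const_smul α
    have := (hcont.tendsto θhat).comp hconv
    rwa [hNS, sub_self, smul_zero] at this
  refine tendsto_sub_nhds_zero_iff.1 <| tendsto_zero_of_eq_apply_add
    (A := fun t ↦ ContinuousLinearMap.id ℝ _ - α • H (θh t))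
    (fun t ↦ ContinuousLinearMap.norm_id_sub_smul_le hF.contDiffAt.isSymmetric_fderiv_gradient
      hmL hα.le hαL' (heigh t)) (by linarith [mul_pos hα hm]) (fun t ↦ ?_) hpert
  rw [hrec (t + 1) t.succ_pos, Nat.add_sub_cancel]
  simp only [sub_apply, ContinuousLinearMap.id_apply, smul_apply, map_sub, smul_add, smul_sub]
  abel

/-- Theorem 6: at convergence of the base GD iterates, the IACV linearized
iteration converges to the one-step Newton estimator. -/
theorem stmt9 {p : ℕ} (F : EuclideanSpace ℝ (Fin p) → ℝ) (m L α : ℝ)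
    (hF : ContDiff ℝ 2 F) (hm : 0 < m) (hmL : m ≤ L) (hα : 0 < α) (hαL : α < 1 / L)
    (θh θt : ℕ → EuclideanSpace ℝ (Fin p)) (θhat θNS : EuclideanSpace ℝ (Fin p))
    (heigh : ∀ t (v : EuclideanSpace ℝ (Fin p)),
      m * ‖v‖ ^ 2 ≤ ⟪v, fderiv ℝ (gradient F) (θh t) v⟫ ∧
      ⟪v, fderiv ℝ (gradient F) (θh t) v⟫ ≤ L * ‖v‖ ^ 2)
    (heighat : ∀ v : EuclideanSpace ℝ (Fin p),
      m * ‖v‖ ^ 2 ≤ ⟪v, fderiv ℝ (gradient F) θhat v⟫ ∧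
      ⟪v, fderiv ℝ (gradient F) θhat v⟫ ≤ L * ‖v‖ ^ 2)
    (hconv : Tendsto θh atTop (nhds θhat))
    (hNS : fderiv ℝ (gradient F) θhat (θhat - θNS) = gradient F θhat)
    (hrec : ∀ t ≥ 1, θt t = θt (t - 1) -
      α • (gradient F (θh (t - 1)) +
        fderiv ℝ (gradient F) (θh (t - 1)) (θt (t - 1) - θh (t - 1)))) :
    Tendsto θt atTop (nhds θNS) :=
  stmt9_general F m L α hF hm hmL hα hαL θh θt θhat θNS heigh hconv hNS hrec
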